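/- arXiv:1012.2354 — 4 statements merged into one kernel-verified Lean document; each statement's English description precedes it below -/
import Mathlib

section
/- Let a be an aperiodic cycle of length r > 1. For a positive part p of a (a maximal cyclic run of entries ≥ 0, or the whole cycle if all entries are ≥ 0), define θ(p) = l(p) if p consists of a single bloc of zeroes or l(p) = r, and θ(p) = 1 + l(p) otherwise. Define ε*(b) = ε(b) for each positive bloc b, except ε*(b) = 0 when b is a locally maximal bloc with entry 0. Then θ(p) = l(p) + Σ_{b ⊆ p} ε*(b), the sum over blocs contained in p. -/
/-- A function `a : ℤ → ℤ` has period `r`. -/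
def CyclePeriodic (a : ℤ → ℤ) (r : ℤ) : Prop := ∀ i, a (i + r) = a i

/-- `a` is an aperiodic cycle of length `r`: it has period `r` and no smaller
positive period. -/
def CycleAperiodic (a : ℤ → ℤ) (r : ℤ) : Prop :=
  CyclePeriodic a r ∧ ∀ d : ℤ, 0 < d → d < r → ¬ CyclePeriodic a d

/-- `i` is the first index of a bloc (a maximal run of equal consecutive entries). -/
def blocStart (a : ℤ → ℤ) (i : ℤ) : Prop := a (i - 1) ≠ a i

instance (a : ℤ → ℤ) (i : ℤ) : Decidable (blocStart a i) :=
  inferInstanceAs (Decidable (_ ≠ _))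

/-- The length of the bloc starting at `i`. -/
noncomputable def blocLen (a : ℤ → ℤ) (i : ℤ) : ℤ :=
  sInf {l : ℤ | 0 < l ∧ a (i + l) ≠ a i}

/-- `ε` of the bloc starting at `i`: `1` if locally maximal (both neighbouring
blocs have strictly smaller entries), `-1` if locally minimal, `0` otherwise. -/
noncomputable def blocEps (a : ℤ → ℤ) (i : ℤ) : ℤ :=
  if a (i - 1) < a i ∧ a (i + blocLen a i) < a i then 1
  else if a i < a (i - 1) ∧ a i < a (i + blocLen a i) then -1
  else 0

/-- `ε*` of the bloc starting at `i`: equal to `ε`, except it is `0` for a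
locally maximal bloc with entry `0`. -/
noncomputable def blocEpsStar (a : ℤ → ℤ) (i : ℤ) : ℤ :=
  if a i = 0 ∧ blocEps a i = 1 then 0 else blocEps a i

/-- `i` is the first index of a positive part (a maximal run of entries `≥ 0`). -/
def partStart (a : ℤ → ℤ) (i : ℤ) : Prop := 0 ≤ a i ∧ a (i - 1) < 0

instance (a : ℤ → ℤ) (i : ℤ) : Decidable (partStart a i) :=
  inferInstanceAs (Decidable (_ ∧ _))

/-- The length of the positive part starting at `i`. -/
noncomputable def partLen (a : ℤ → ℤ) (i : ℤ) : ℤ :=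
  sInf {l : ℤ | 0 < l ∧ a (i + l) < 0}

/-- `θ(p)` for the positive part `p` starting at `i`: `l(p)` if `p` is a single
bloc of zeroes, and `1 + l(p)` otherwise.  (The case `l(p) = r` does not occur
for a part with a genuine start.) -/
noncomputable def thetaP (a : ℤ → ℤ) (i : ℤ) : ℤ :=
  if ∀ k ∈ Finset.Ico i (i + partLen a i), a k = 0 then partLen a i
  else partLen a i + 1

/-- `θ(a) = Σ θ(p)` over the positive parts of `a`, computed from the window
`[t, t+r)`; when all entries are `≥ 0` the whole cycle is a single positive
part `p` with `θ(p) = l(p) = r`. -/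
noncomputable def thetaSum (a : ℤ → ℤ) (r t : ℤ) : ℤ :=
  if ∀ j ∈ Finset.Ico t (t + r), 0 ≤ a j then r
  else ∑ i ∈ Finset.Ico t (t + r), if partStart a i then thetaP a i else 0

/-- `γ₁(a)` : the number of entries of `a` that are `≥ 0`. -/
noncomputable def gammaOne (a : ℤ → ℤ) (r t : ℤ) : ℤ :=
  ∑ i ∈ Finset.Ico t (t + r), if 0 ≤ a i then 1 else 0

/-- `γ₂(a) = Σ max(aᵢ, 0)`. -/
noncomputable def gammaTwo (a : ℤ → ℤ) (r t : ℤ) : ℤ :=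
  ∑ i ∈ Finset.Ico t (t + r), max (a i) 0

/-- `γ₃(a) = Σ ε*(b)` over the positive blocs of `a`. -/
noncomputable def gammaThree (a : ℤ → ℤ) (r t : ℤ) : ℤ :=
  ∑ i ∈ Finset.Ico t (t + r),
    if blocStart a i ∧ 0 ≤ a i then blocEpsStar a i else 0


/-!
At the start `k` of a bloc of length `L`, `ε = descent (k + L) - descent k`, where `descent j`
records a strict step down from `j - 1` to `j`. Summed over the blocs of a stretch that begins
and ends at bloc starts, `ε` therefore telescopes to the difference of the descents at the two
ends. A positive part is entered by a step up and left by a step down, so its `ε`-sum is `1`,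
while over a whole period the sum is `0`. Finally `ε*` differs from `ε` only at a locally
maximal bloc of zeroes; inside a positive part such a bloc has negative neighbours, so it is the
whole part, which is exactly the case `θ(p) = l(p)`.
-/

open Finset

theorem Function.Periodic.sum_Ico_add_eq {M : Type*} [AddCommMonoid M] {f : ℤ → M} {r : ℤ}
    (hf : Function.Periodic f r) (s t : ℤ) :
    ∑ k ∈ Ico s (s + r), f k = ∑ k ∈ Ico t (t + r), f k := by
  set g : ℤ → M := fun s => ∑ k ∈ Ico s (s + r), f k
  have hg : Function.Periodic g 1 := by
    intro s
    rcases le_or_gt r 0 with hr | hr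
    · simp only [g, Ico_eq_empty_of_le (by omega : s + 1 + r ≤ s + 1),
        Ico_eq_empty_of_le (by omega : s + r ≤ s)]
    simp only [g, add_right_comm s 1 r]
    rw [← insert_Ico_add_one_left_eq_Ico (by omega : s < s + r),
      ← insert_Ico_right_eq_Ico_add_one (by omega : s + 1 ≤ s + r),
      sum_insert (by simp), sum_insert (by simp), hf, add_comm]
  exact (by simpa using hg.int_mul (t - s) s : g t = g s).symm

theorem Int.sInf_setOf_pos_spec {P : ℤ → Prop} (h : ∃ l, 0 < l ∧ P l) :
    0 < sInf {l | 0 < l ∧ P l} ∧ P (sInf {l | 0 < l ∧ P l}) :=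
  Int.csInf_mem (s := {l | 0 < l ∧ P l}) h ⟨0, fun _ hl => hl.1.le⟩

theorem Int.not_of_lt_sInf_setOf_pos {P : ℤ → Prop} {l : ℤ} (h0 : 0 < l)
    (hl : l < sInf {l | 0 < l ∧ P l}) : ¬ P l := fun hP =>
  (csInf_le (s := {l | 0 < l ∧ P l}) ⟨0, fun _ hx => hx.1.le⟩ ⟨h0, hP⟩).not_gt hl

namespace CyclePeriodic

variable {a : ℤ → ℤ} {r : ℤ}

theorem blocStart_iff (h : CyclePeriodic a r) (k : ℤ) :
    blocStart a (k + r) ↔ blocStart a k := by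
  rw [blocStart, blocStart, add_sub_right_comm, h, h]

theorem blocLen_eq (h : CyclePeriodic a r) (k : ℤ) : blocLen a (k + r) = blocLen a k := by
  have h' : ∀ x, a (x + r) = a x := h
  simp only [blocLen, add_right_comm k r, h']

theorem blocEpsStar_eq (h : CyclePeriodic a r) (k : ℤ) :
    blocEpsStar a (k + r) = blocEpsStar a k := by
  have h' : ∀ x, a (x + r) = a x := h
  simp [blocEpsStar, blocEps, h.blocLen_eq, add_sub_right_comm k r, add_right_comm k r, h']

end CyclePeriodic

section Blocs

variable {a : ℤ → ℤ} {i k e : ℤ}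

def descent (a : ℤ → ℤ) (k : ℤ) : ℤ := if a k < a (k - 1) then 1 else 0

theorem apply_eq_of_mem_Ico_blocLen (hk : k ∈ Ico i (i + blocLen a i)) : a k = a i := by
  rw [mem_Ico] at hk
  rcases hk.1.eq_or_lt with rfl | hlt
  · rfl
  · simpa using Int.not_of_lt_sInf_setOf_pos (P := fun l => a (i + l) ≠ a i)
      (sub_pos.2 hlt) (by rw [← blocLen]; omega)

theorem lt_of_blocEps_eq_one (h : blocEps a i = 1) :
    a (i - 1) < a i ∧ a (i + blocLen a i) < a i := by
  unfold blocEps at h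
  split_ifs at h with h1 <;> first | exact h1 | omega

theorem blocEpsStar_eq_blocEps_of_nonneg (h : 0 ≤ a (i - 1)) : blocEpsStar a i = blocEps a i :=
  if_neg fun ⟨h0, h1⟩ => by have := (lt_of_blocEps_eq_one h1).1; omega

theorem exists_blocStart_of_not_cyclePeriodic_one (h : ¬ CyclePeriodic a 1) :
    ∃ j, blocStart a j := by
  by_contra! H
  exact h fun m => by simpa using (not_not.1 (H (m + 1))).symm

theorem sum_Ico_ite_blocStart_of_forall_eq (hie : i < e) (hconst : ∀ k ∈ Ico i e, a k = a i)
    (f : ℤ → ℤ) :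
    ∑ k ∈ Ico i e, (if blocStart a k then f k else 0) = if blocStart a i then f i else 0 := by
  refine sum_eq_single_of_mem i (by simpa using hie) fun k hk hki => if_neg ?_
  have hk' := mem_Ico.1 hk
  rw [blocStart, not_not, hconst k hk, hconst (k - 1) (mem_Ico.2 (by omega))]

theorem exists_apply_ne_of_blocStart (he : blocStart a e) (hk : k < e) :
    ∃ l, 0 < l ∧ a (k + l) ≠ a k := by
  by_cases hek : a e = a k
  · refine ⟨e - 1 - k, ?_, by rw [add_sub_cancel, ← hek]; exact he⟩
    rcases (show k ≤ e - 1 by omega).eq_or_lt with rfl | hlt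
    · exact absurd (by rw [hek]) he
    · omega
  · exact ⟨e - k, by omega, by rwa [add_sub_cancel]⟩

theorem add_blocLen_le_of_blocStart (he : blocStart a e) (hk : k < e) :
    k + blocLen a k ≤ e := by
  by_contra! h
  apply he
  rw [apply_eq_of_mem_Ico_blocLen (a := a) (i := k) (mem_Ico.2 ⟨by omega, h⟩),
    apply_eq_of_mem_Ico_blocLen (a := a) (i := k) (mem_Ico.2 ⟨by omega, by omega⟩)]

section BlocEnd

variable (hend : ∃ l, 0 < l ∧ a (i + l) ≠ a i)
include hend

theorem blocLen_pos : 0 < blocLen a i := (Int.sInf_setOf_pos_spec hend).1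

theorem apply_add_blocLen_ne : a (i + blocLen a i) ≠ a i := (Int.sInf_setOf_pos_spec hend).2

theorem apply_add_blocLen_sub_one : a (i + blocLen a i - 1) = a i :=
  apply_eq_of_mem_Ico_blocLen (by have := blocLen_pos hend; rw [mem_Ico]; omega)

theorem blocStart_add_blocLen : blocStart a (i + blocLen a i) := by
  rw [blocStart, apply_add_blocLen_sub_one hend]
  exact (apply_add_blocLen_ne hend).symm

theorem blocEps_eq_descent_sub (hi : blocStart a i) :
    blocEps a i = descent a (i + blocLen a i) - descent a i := by
  have hne := apply_add_blocLen_ne hend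
  rw [descent, descent, apply_add_blocLen_sub_one hend, blocEps]
  rcases (Ne.symm hi).lt_or_gt with h | h <;> rcases hne.lt_or_gt with g | g <;>
    simp only [h, g, h.not_gt, g.not_gt, and_self, and_true, and_false,
      if_true, if_false] <;> norm_num

end BlocEnd

theorem sum_blocEps_Ico_eq_descent_sub {t : ℤ} (ht : blocStart a t)
    (he : blocStart a e) (hte : t ≤ e) :
    ∑ k ∈ Ico t e, (if blocStart a k then blocEps a k else 0) = descent a e - descent a t := by
  induction hn : (e - t).toNat using Nat.strong_induction_on generalizing t with
  | _ n ih =>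
  rcases hte.eq_or_lt with rfl | hlt
  · simp
  have hend := exists_apply_ne_of_blocStart he hlt
  have hL := blocLen_pos hend
  have hLe := add_blocLen_le_of_blocStart he hlt
  rw [← Ico_union_Ico_eq_Ico (by omega : t ≤ t + blocLen a t) hLe,
    sum_union (Ico_disjoint_Ico_consecutive _ _ _),
    sum_Ico_ite_blocStart_of_forall_eq (by omega) (fun _ => apply_eq_of_mem_Ico_blocLen),
    if_pos ht, ih _ (by omega) (blocStart_add_blocLen hend) hLe rfl,
    blocEps_eq_descent_sub hend ht]
  ring

end Blocs

section Parts

variable {a : ℤ → ℤ} {i k : ℤ}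

theorem nonneg_of_mem_Ico_partLen (hi : 0 ≤ a i) (hk : k ∈ Ico i (i + partLen a i)) :
    0 ≤ a k := by
  rw [mem_Ico] at hk
  rcases hk.1.eq_or_lt with rfl | hlt
  · exact hi
  · simpa using Int.not_of_lt_sInf_setOf_pos (P := fun l => a (i + l) < 0)
      (sub_pos.2 hlt) (by rw [← partLen]; omega)

section PartEnd

variable (hend : ∃ l, 0 < l ∧ a (i + l) < 0)
include hend

theorem partLen_pos : 0 < partLen a i := (Int.sInf_setOf_pos_spec hend).1

theorem apply_add_partLen_neg : a (i + partLen a i) < 0 := (Int.sInf_setOf_pos_spec hend).2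

theorem blocStart_add_partLen (hi : 0 ≤ a i) : blocStart a (i + partLen a i) := by
  have hL := partLen_pos hend
  have := nonneg_of_mem_Ico_partLen hi (k := i + partLen a i - 1)
    (mem_Ico.2 ⟨by omega, by omega⟩)
  exact ne_of_gt (by linarith [apply_add_partLen_neg hend])

theorem sum_blocEps_Ico_partLen_eq_one (hi : partStart a i) :
    ∑ k ∈ Ico i (i + partLen a i), (if blocStart a k then blocEps a k else 0) = 1 := by
  have hL := partLen_pos hend
  have hlast := nonneg_of_mem_Ico_partLen hi.1 (k := i + partLen a i - 1)
    (mem_Ico.2 ⟨by omega, by omega⟩)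
  rw [sum_blocEps_Ico_eq_descent_sub (ne_of_lt (hi.2.trans_le hi.1))
    (blocStart_add_partLen hend hi.1) (by omega), descent, descent,
    if_pos ((apply_add_partLen_neg hend).trans_le hlast), if_neg (not_lt.2 (hi.2.le.trans hi.1))]
  norm_num

theorem forall_eq_zero_of_blocEps_eq_one (hi : partStart a i)
    (hk : k ∈ Ico i (i + partLen a i)) (h0 : a k = 0) (h1 : blocEps a k = 1) :
    ∀ j ∈ Ico i (i + partLen a i), a j = 0 := by
  obtain ⟨hleft, hright⟩ := lt_of_blocEps_eq_one h1
  have hk' := mem_Ico.1 hk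
  obtain rfl : k = i := by
    by_contra hki
    have := nonneg_of_mem_Ico_partLen hi.1 (k := k - 1) (mem_Ico.2 ⟨by omega, by omega⟩)
    omega
  have hbloc := blocLen_pos (exists_apply_ne_of_blocStart (blocStart_add_partLen hend hi.1) hk'.2)
  have hlen : partLen a k ≤ blocLen a k := by
    by_contra! hlt
    have := nonneg_of_mem_Ico_partLen hi.1 (k := k + blocLen a k)
      (mem_Ico.2 ⟨by omega, by omega⟩)
    omega
  intro j hj
  rw [← h0]
  exact apply_eq_of_mem_Ico_blocLen
    (mem_Ico.2 ⟨(mem_Ico.1 hj).1, by linarith [(mem_Ico.1 hj).2]⟩)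

theorem thetaP_eq_of_partStart (hi : partStart a i) :
    thetaP a i = partLen a i +
      ∑ k ∈ Ico i (i + partLen a i), (if blocStart a k then blocEpsStar a k else 0) := by
  have hsum := sum_blocEps_Ico_partLen_eq_one hend hi
  have hmem : i ∈ Ico i (i + partLen a i) :=
    mem_Ico.2 ⟨le_rfl, by linarith [partLen_pos hend]⟩
  have hbs : blocStart a i := ne_of_lt (hi.2.trans_le hi.1)
  rw [thetaP]
  split_ifs with hzero
  · have hconst k hk : a k = a i := (hzero k hk).trans (hzero i hmem).symm
    rw [sum_Ico_ite_blocStart_of_forall_eq (mem_Ico.1 hmem).2 hconst, if_pos hbs] at hsum ⊢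
    rw [blocEpsStar, if_pos ⟨hzero i hmem, hsum⟩, add_zero]
  · have hstar : ∀ k ∈ Ico i (i + partLen a i), blocEpsStar a k = blocEps a k := fun k hk =>
      if_neg fun ⟨h0, h1⟩ => hzero (forall_eq_zero_of_blocEps_eq_one hend hi hk h0 h1)
    rw [sum_congr rfl fun k hk => by rw [hstar k hk], hsum]

end PartEnd

end Parts

theorem sum_blocEpsStar_eq_zero_of_nonneg {a : ℤ → ℤ} {r j : ℤ} (hper : CyclePeriodic a r)
    (hr : 0 < r) (hj : blocStart a j) (hnonneg : ∀ k, 0 ≤ a k) (t : ℤ) :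
    ∑ k ∈ Ico t (t + r), (if blocStart a k then blocEpsStar a k else 0) = 0 := by
  have hperiodic : Function.Periodic (fun k => if blocStart a k then blocEpsStar a k else 0) r :=
    fun k => by simp only [hper.blocStart_iff, hper.blocEpsStar_eq]
  have h' : ∀ x, a (x + r) = a x := hper
  rw [hperiodic.sum_Ico_add_eq t j,
    sum_congr rfl fun k _ => by rw [blocEpsStar_eq_blocEps_of_nonneg (hnonneg _)],
    sum_blocEps_Ico_eq_descent_sub hj ((hper.blocStart_iff j).2 hj) (by omega),
    descent, descent, add_sub_right_comm, h', h', sub_self]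

/-- The second clause is the case where every entry is `≥ 0`: the only positive part is then the
whole cycle, with `θ(p) = l(p) = r`. -/
theorem thetaP_eq (a : ℤ → ℤ) (r : ℤ) (hr : 1 < r) (hap : CycleAperiodic a r) :
    (∀ i : ℤ, partStart a i →
      thetaP a i = partLen a i +
        ∑ k ∈ Finset.Ico i (i + partLen a i),
          if blocStart a k then blocEpsStar a k else 0) ∧
    ((∀ j, 0 ≤ a j) → ∀ t : ℤ,
      (r : ℤ) = r + ∑ k ∈ Finset.Ico t (t + r),
          if blocStart a k then blocEpsStar a k else 0) := by
  obtain ⟨hper, hmin⟩ := hap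
  refine ⟨fun i hi => thetaP_eq_of_partStart ⟨r - 1, by omega, ?_⟩ hi, fun hnonneg t => ?_⟩
  · rw [show i + (r - 1) = i - 1 + r by ring, hper]
    exact hi.2
  · obtain ⟨j, hj⟩ := exists_blocStart_of_not_cyclePeriodic_one (hmin 1 one_pos hr)
    rw [sum_blocEpsStar_eq_zero_of_nonneg hper (by omega) hj hnonneg, add_zero]
end

section
/- Let a be an aperiodic cycle of length r > 1. Let γ₁(a) be the number of entries ≥ 0, γ₃(a) = Σ ε*(b) over positive blocs b, and θ(a) = Σ θ(p) over positive parts p. Then θ(a) = γ₁(a) + γ₃(a). -/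
/-!
Write `θ(p) = l(p) + 1 - [p is a single bloc of zeroes]`. Such a part is exactly a positive
bloc with entry `0` that is locally maximal, i.e. a bloc where `ε` and `ε*` differ, so these
corrections cancel. What remains is `Σ_p l(p) = γ₁` and `Σ ε(b) = #parts`, the sum over
positive blocs `b`. Both follow by telescoping over one period: indexed by position `j`, each
summand equals the target summand plus `Φ (j - 1) - Φ j` for a periodic potential `Φ`, namely
the number of entries after `j` in its positive part (`partTail`), resp. the indicator that
`a j ≥ 0` and the next different entry is larger (`nonnegRise`).
-/

open Finset

namespace Int

variable {p : ℤ → Prop} {m : ℤ}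

theorem csInf_pos_eq (hm : 0 < m) (hpm : p m) (hlt : ∀ l, 0 < l → l < m → ¬ p l) :
    sInf {l : ℤ | 0 < l ∧ p l} = m := by
  have hbdd : BddBelow {l : ℤ | 0 < l ∧ p l} := ⟨0, fun l hl => hl.1.le⟩
  refine le_antisymm (csInf_le hbdd ⟨hm, hpm⟩) (le_csInf ⟨m, hm, hpm⟩ ?_)
  rintro l ⟨hl, hpl⟩
  by_contra! hlm
  exact hlt l hl hlm hpl

theorem csInf_pos_spec (h : ∃ l, 0 < l ∧ p l) :
    0 < sInf {l : ℤ | 0 < l ∧ p l} ∧ p (sInf {l : ℤ | 0 < l ∧ p l}) ∧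
      ∀ l, 0 < l → l < sInf {l : ℤ | 0 < l ∧ p l} → ¬ p l := by
  have hbdd : BddBelow {l : ℤ | 0 < l ∧ p l} := ⟨0, fun l hl => hl.1.le⟩
  obtain ⟨hpos, hp⟩ := Int.csInf_mem h hbdd
  exact ⟨hpos, hp, fun l hl hlt hpl => (csInf_le hbdd ⟨hl, hpl⟩).not_gt hlt⟩

theorem csInf_pos_eq_ite [DecidablePred p] (h : ∃ l, 0 < l ∧ p l) :
    sInf {l : ℤ | 0 < l ∧ p l} =
      if p 1 then 1 else sInf {l : ℤ | 0 < l ∧ p (l + 1)} + 1 := by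
  split_ifs with h1
  · exact csInf_pos_eq one_pos h1 (fun l hl hl1 => by omega)
  · obtain ⟨l, hl, hpl⟩ := h
    have hl1 : l ≠ 1 := by rintro rfl; exact h1 hpl
    obtain ⟨hpos, hpm, hlt⟩ :=
      csInf_pos_spec (p := fun l => p (l + 1)) ⟨l - 1, by omega, by simpa⟩
    refine csInf_pos_eq (by omega) hpm fun k hk hkm => ?_
    rcases eq_or_lt_of_le (show 1 ≤ k by omega) with rfl | hk1
    · exact h1
    · simpa using hlt (k - 1) (by omega) (by omega)

end Int

namespace Function.Periodic

variable {α : Type*} {f : ℤ → α} {r : ℤ}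

theorem exists_pos_add_eq (hf : Periodic f r) (hr : 0 < r) (k x : ℤ) :
    ∃ l, 0 < l ∧ f (k + l) = f x := by
  obtain ⟨y, hy, hxy⟩ := hf.exists_mem_Ico hr x (k + 1)
  exact ⟨y - k, by simp only [Set.mem_Ico] at hy; omega, by rw [add_sub_cancel, hxy]⟩

theorem sum_Ico_sub_pred {R : ℤ → ℤ} (hR : Periodic R r) (hr : 0 ≤ r) (t : ℤ) :
    ∑ j ∈ Ico t (t + r), (R (j - 1) - R j) = 0 := by
  suffices h : ∀ b, t ≤ b → ∑ j ∈ Ico t b, (R (j - 1) - R j) = R (t - 1) - R (b - 1) by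
    rw [h _ (by omega), ← hR.sub_eq (t + r - 1), show t + r - 1 - r = t - 1 by ring, sub_self]
  intro b hb
  induction b, hb using Int.leInduction with
  | base => simp
  | succ b hb ih =>
    rw [← insert_Ico_right_eq_Ico_add_one hb, sum_insert right_notMem_Ico, ih,
      add_sub_cancel_right]
    ring

end Function.Periodic

section Blocs

variable {a : ℤ → ℤ} {r : ℤ}

theorem CycleAperiodic.exists_pos_add_ne (hr : 1 < r) (hap : CycleAperiodic a r) (k : ℤ) :
    ∃ l, 0 < l ∧ a (k + l) ≠ a k := by
  have hp : Function.Periodic a r := hap.1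
  by_contra! hconst
  have heq : ∀ x, a x = a k := fun x => by
    obtain ⟨l, hl, hlx⟩ := hp.exists_pos_add_eq (by omega) k x
    rw [← hlx, hconst l hl]
  exact hap.2 1 one_pos hr fun i => (heq _).trans (heq i).symm

theorem blocLen_spec {k : ℤ} (h : ∃ l, 0 < l ∧ a (k + l) ≠ a k) :
    0 < blocLen a k ∧ a (k + blocLen a k) ≠ a k ∧
      ∀ l, 0 < l → l < blocLen a k → a (k + l) = a k := by
  obtain ⟨hpos, hne, hlt⟩ := Int.csInf_pos_spec h
  exact ⟨hpos, hne, fun l hl hlk => not_not.mp (hlt l hl hlk)⟩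

theorem blocLen_eq_ite {k : ℤ} (h : ∃ l, 0 < l ∧ a (k + l) ≠ a k) :
    blocLen a k = if a (k + 1) = a k then blocLen a (k + 1) + 1 else 1 := by
  rw [blocLen, Int.csInf_pos_eq_ite h]
  by_cases hk : a (k + 1) = a k
  · simp only [hk, ne_eq, not_true_eq_false, if_false, if_true, blocLen, ← add_assoc,
      add_right_comm k]
  · simp [hk]

theorem partLen_spec {k : ℤ} (h : ∃ l, 0 < l ∧ a (k + l) < 0) :
    0 < partLen a k ∧ a (k + partLen a k) < 0 ∧
      ∀ l, 0 < l → l < partLen a k → 0 ≤ a (k + l) := by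
  obtain ⟨hpos, hneg, hlt⟩ := Int.csInf_pos_spec h
  exact ⟨hpos, hneg, fun l hl hlk => not_lt.mp (hlt l hl hlk)⟩

theorem partLen_eq_ite {k : ℤ} (h : ∃ l, 0 < l ∧ a (k + l) < 0) :
    partLen a k = if a (k + 1) < 0 then 1 else partLen a (k + 1) + 1 := by
  rw [partLen, Int.csInf_pos_eq_ite h, partLen]
  simp only [← add_assoc, add_right_comm k]

theorem blocLen_periodic (hp : Function.Periodic a r) : Function.Periodic (blocLen a) r := by
  intro k
  simp only [blocLen, add_right_comm k r, hp _]

theorem partLen_periodic (hp : Function.Periodic a r) : Function.Periodic (partLen a) r := by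
  intro k
  simp only [partLen, add_right_comm k r, hp _]

end Blocs

section Telescoping

variable {a : ℤ → ℤ} {r : ℤ}

noncomputable def nonnegRise (a : ℤ → ℤ) (k : ℤ) : ℤ :=
  if 0 ≤ a k ∧ a k < a (k + blocLen a k) then 1 else 0

noncomputable def partTail (a : ℤ → ℤ) (k : ℤ) : ℤ :=
  if 0 ≤ a k then partLen a k - 1 else 0

theorem ite_blocStart_blocEps_eq (hchange : ∀ k, ∃ l, 0 < l ∧ a (k + l) ≠ a k) (j : ℤ) :
    (if blocStart a j ∧ 0 ≤ a j then blocEps a j else 0) =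
      (if partStart a j then 1 else 0) + (nonnegRise a (j - 1) - nonnegRise a j) := by
  have hrec := blocLen_eq_ite (hchange (j - 1))
  rw [sub_add_cancel] at hrec
  by_cases hj : a j = a (j - 1)
  · rw [if_pos hj] at hrec
    have hstart : ¬ blocStart a j := not_not.mpr hj.symm
    have hpart : ¬ partStart a j := fun h => by simp only [partStart] at h; omega
    rw [if_neg (fun h => hstart h.1), if_neg hpart, nonnegRise, nonnegRise, hrec,
      show j - 1 + (blocLen a j + 1) = j + blocLen a j by ring, hj]
    ring
  · rw [if_neg hj] at hrec
    have hnext := (blocLen_spec (hchange j)).2.1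
    simp only [blocEps, blocStart, partStart, nonnegRise, hrec, sub_add_cancel]
    split_ifs <;> omega

theorem sum_ite_blocStart_blocEps_eq (hp : Function.Periodic a r) (hr : 0 ≤ r)
    (hchange : ∀ k, ∃ l, 0 < l ∧ a (k + l) ≠ a k) (t : ℤ) :
    ∑ j ∈ Ico t (t + r), (if blocStart a j ∧ 0 ≤ a j then blocEps a j else 0) =
      ∑ j ∈ Ico t (t + r), (if partStart a j then 1 else 0) := by
  have hrise : Function.Periodic (nonnegRise a) r := by
    intro k
    simp only [nonnegRise, blocLen_periodic hp k, add_right_comm k r, hp _]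
  simp only [ite_blocStart_blocEps_eq hchange, sum_add_distrib, hrise.sum_Ico_sub_pred hr,
    add_zero]

theorem ite_nonneg_eq_partLen_add (hneg : ∀ k, ∃ l, 0 < l ∧ a (k + l) < 0) (j : ℤ) :
    (if 0 ≤ a j then 1 else 0) =
      (if partStart a j then partLen a j else 0) + (partTail a (j - 1) - partTail a j) := by
  have hrec := partLen_eq_ite (hneg (j - 1))
  rw [sub_add_cancel] at hrec
  simp only [partStart, partTail, hrec]
  split_ifs <;> omega

theorem sum_ite_partStart_partLen (hp : Function.Periodic a r) (hr : 0 ≤ r)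
    (hneg : ∀ k, ∃ l, 0 < l ∧ a (k + l) < 0) (t : ℤ) :
    ∑ j ∈ Ico t (t + r), (if partStart a j then partLen a j else 0) = gammaOne a r t := by
  have htail : Function.Periodic (partTail a) r := by
    intro k
    simp only [partTail, partLen_periodic hp k, hp k]
  simp only [gammaOne, ite_nonneg_eq_partLen_add hneg, sum_add_distrib,
    htail.sum_Ico_sub_pred hr, add_zero]

end Telescoping

section ZeroParts

variable {a : ℤ → ℤ} {r : ℤ}

theorem partStart_and_zero_iff (hp : Function.Periodic a r) (hr : 0 < r)
    (hchange : ∀ k, ∃ l, 0 < l ∧ a (k + l) ≠ a k) (i : ℤ) :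
    (partStart a i ∧ ∀ k ∈ Ico i (i + partLen a i), a k = 0) ↔
      (blocStart a i ∧ a i = 0 ∧ blocEps a i = 1) := by
  constructor
  · rintro ⟨hps, hz⟩
    obtain ⟨l, hl, hla⟩ := hp.exists_pos_add_eq hr i (i - 1)
    obtain ⟨hm, hneg, -⟩ := partLen_spec ⟨l, hl, hla.trans_lt hps.2⟩
    have hzero : ∀ l, 0 ≤ l → l < partLen a i → a (i + l) = 0 :=
      fun l hl hlm => hz _ (mem_Ico.mpr ⟨by omega, by omega⟩)
    have h0 : a i = 0 := by simpa using hzero 0 le_rfl hm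
    have hbl : blocLen a i = partLen a i :=
      Int.csInf_pos_eq hm (by omega) fun l hl hlm => by simp [hzero l hl.le hlm, h0]
    refine ⟨fun h => by have := hps.2; omega, h0, ?_⟩
    rw [blocEps, hbl, if_pos ⟨by have := hps.2; omega, by omega⟩]
  · rintro ⟨hbs, h0, heps⟩
    have hmax : a (i - 1) < a i ∧ a (i + blocLen a i) < a i := by
      unfold blocEps at heps
      split_ifs at heps with h <;> first | exact h | omega
    obtain ⟨hm, -, hconst⟩ := blocLen_spec (hchange i)
    have hpl : partLen a i = blocLen a i :=
      Int.csInf_pos_eq hm (by omega) fun l hl hlm => by simp [hconst l hl hlm, h0]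
    refine ⟨⟨h0.ge, by omega⟩, fun k hk => ?_⟩
    rw [hpl, mem_Ico] at hk
    rcases eq_or_lt_of_le hk.1 with rfl | hik
    · exact h0
    · simpa [h0] using hconst (k - i) (by omega) (by omega)

theorem ite_blocEpsStar_eq (hp : Function.Periodic a r) (hr : 0 < r)
    (hchange : ∀ k, ∃ l, 0 < l ∧ a (k + l) ≠ a k) (i : ℤ) :
    (if blocStart a i ∧ 0 ≤ a i then blocEpsStar a i else 0) =
      (if blocStart a i ∧ 0 ≤ a i then blocEps a i else 0) -
        (if partStart a i ∧ ∀ k ∈ Ico i (i + partLen a i), a k = 0 then 1 else 0) := by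
  simp only [blocEpsStar, partStart_and_zero_iff hp hr hchange]
  split_ifs <;> grind

theorem ite_thetaP_eq (a : ℤ → ℤ) (i : ℤ) :
    (if partStart a i then thetaP a i else 0) =
      (if partStart a i then partLen a i else 0) + (if partStart a i then 1 else 0) -
        (if partStart a i ∧ ∀ k ∈ Ico i (i + partLen a i), a k = 0 then 1 else 0) := by
  simp only [thetaP]
  split_ifs <;> simp_all

end ZeroParts

/-- For an aperiodic cycle of length `r > 1`, `θ(a) = γ₁(a) + γ₃(a)`. -/
theorem thetaSum_eq_gammaOne_add_gammaThree (a : ℤ → ℤ) (r : ℤ) (hr : 1 < r)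
    (hap : CycleAperiodic a r) (t : ℤ) :
    thetaSum a r t = gammaOne a r t + gammaThree a r t := by
  have hp : Function.Periodic a r := hap.1
  have hr0 : 0 < r := by omega
  have hchange := hap.exists_pos_add_ne hr
  have hγ₃ : gammaThree a r t = ∑ i ∈ Ico t (t + r), (if partStart a i then 1 else 0) -
      ∑ i ∈ Ico t (t + r),
        (if partStart a i ∧ ∀ k ∈ Ico i (i + partLen a i), a k = 0 then 1 else 0) := by
    rw [gammaThree, sum_congr rfl fun i _ => ite_blocEpsStar_eq hp hr0 hchange i, sum_sub_distrib,
      sum_ite_blocStart_blocEps_eq hp hr0.le hchange]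
  rw [thetaSum, hγ₃]
  split_ifs with hall
  · have hnonneg : ∀ x, 0 ≤ a x := fun x => by
      obtain ⟨y, hy, hxy⟩ := hp.exists_mem_Ico hr0 x t
      exact hxy ▸ hall y (by simpa using hy)
    have hnostart : ∀ j, ¬ partStart a j := fun j h => (hnonneg (j - 1)).not_gt h.2
    simp [gammaOne, hnonneg, hnostart, hr0.le]
  · push Not at hall
    obtain ⟨x, -, hx⟩ := hall
    have hneg : ∀ k, ∃ l, 0 < l ∧ a (k + l) < 0 := fun k =>
      (hp.exists_pos_add_eq hr0 k x).imp fun _ ⟨hl, hla⟩ => ⟨hl, hla.trans_lt hx⟩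
    rw [sum_congr rfl fun i _ => ite_thetaP_eq a i, sum_sub_distrib, sum_add_distrib,
      sum_ite_partStart_partLen hp hr0.le hneg]
    ring
end

section
/- Let a be an aperiodic cycle of length r > 1 whose distinct entries are −n_i, with −n_i occurring r_i times. Then P₂(a) := (1−T)^2 Σ_k γ₂(a(k)) T^k is a Laurent polynomial equal to the sum over i of: T^{(n_i+2)/3}(2r_i + r_i T) if n_i ≡ 1 (mod 3); T^{(n_i+1)/3}(r_i + 2r_i T) if n_i ≡ 2 (mod 3); T^{n_i/3}·3r_i T if n_i ≡ 0 (mod 3). -/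
theorem sum_comp_eq_sum_card_filter_smul {α β ι M : Type*} [DecidableEq β] [Fintype ι]
    [AddCommMonoid M] (s : Finset α) (v : α → β) (e : ι → β) (he : Function.Injective e)
    (hcover : ∀ j ∈ s, ∃ i, v j = e i) (f : β → M) :
    ∑ j ∈ s, f (v j) = ∑ i, (s.filter fun j => v j = e i).card • f (e i) := by
  calc ∑ j ∈ s, f (v j) = ∑ j ∈ s, ∑ i, if v j = e i then f (v j) else 0 := by
        refine Finset.sum_congr rfl fun j hj => ?_
        obtain ⟨i₀, hi₀⟩ := hcover j hj
        rw [Fintype.sum_eq_single i₀ fun i hi => if_neg fun h => hi (he (h.symm.trans hi₀)),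
          if_pos hi₀]
    _ = ∑ i, ∑ j ∈ s.filter fun j => v j = e i, f (v j) := by
        rw [Finset.sum_comm]
        exact Finset.sum_congr rfl fun i _ => (Finset.sum_filter _ _).symm
    _ = ∑ i, (s.filter fun j => v j = e i).card • f (e i) := by
        refine Finset.sum_congr rfl fun i _ => ?_
        rw [← Finset.sum_const]
        exact Finset.sum_congr rfl fun j hj => by rw [(Finset.mem_filter.1 hj).2]

theorem gammaTwo_second_difference (a : ℤ → ℤ) (r t k : ℤ) :
    gammaTwo (fun j => a j + 3 * k) r t - 2 * gammaTwo (fun j => a j + 3 * (k - 1)) r t +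
        gammaTwo (fun j => a j + 3 * (k - 2)) r t =
      ∑ j ∈ Finset.Ico t (t + r),
        (max (a j + 3 * k) 0 - 2 * max (a j + 3 * (k - 1)) 0 + max (a j + 3 * (k - 2)) 0) := by
  simp only [gammaTwo, Finset.sum_add_distrib, Finset.sum_sub_distrib, Finset.mul_sum]

theorem max_neg_add_three_mul_second_difference (ν k : ℤ) :
    max (-ν + 3 * k) 0 - 2 * max (-ν + 3 * (k - 1)) 0 + max (-ν + 3 * (k - 2)) 0 =
      if ν % 3 = 1 then
        (if k = (ν + 2) / 3 then 2 else 0) + (if k = (ν + 2) / 3 + 1 then 1 else 0)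
      else if ν % 3 = 2 then
        (if k = (ν + 1) / 3 then 1 else 0) + (if k = (ν + 1) / 3 + 1 then 2 else 0)
      else
        (if k = ν / 3 + 1 then 3 else 0) := by
  simp only [max_def]
  split_ifs <;> omega

theorem P_two_formula_general (a : ℤ → ℤ) (r : ℤ) (t : ℤ)
    (ι : Type*) [Fintype ι] (n : ι → ℤ)
    (hninj : Function.Injective n)
    (hcover : ∀ j ∈ Finset.Ico t (t + r), ∃ i, a j = -n i)
    (m : ι → ℤ)
    (hm : ∀ i, m i = ((Finset.Ico t (t + r)).filter fun j => a j = -n i).card) :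
    ∀ k : ℤ,
      gammaTwo (fun j => a j + 3 * k) r t -
          2 * gammaTwo (fun j => a j + 3 * (k - 1)) r t +
          gammaTwo (fun j => a j + 3 * (k - 2)) r t =
        ∑ i,
          if n i % 3 = 1 then
            (if k = (n i + 2) / 3 then 2 * m i else 0) +
              (if k = (n i + 2) / 3 + 1 then m i else 0)
          else if n i % 3 = 2 then
            (if k = (n i + 1) / 3 then m i else 0) +
              (if k = (n i + 1) / 3 + 1 then 2 * m i else 0)
          else
            (if k = n i / 3 + 1 then 3 * m i else 0) := by
  intro k
  rw [gammaTwo_second_difference, sum_comp_eq_sum_card_filter_smul _ a (fun i => -n i)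
    (neg_injective.comp hninj) hcover
    (fun x => max (x + 3 * k) 0 - 2 * max (x + 3 * (k - 1)) 0 + max (x + 3 * (k - 2)) 0)]
  refine Finset.sum_congr rfl fun i _ => ?_
  rw [nsmul_eq_mul, ← hm i, max_neg_add_three_mul_second_difference]
  split_ifs <;> ring

/-- Lemma 2.3: for an aperiodic cycle of length `r > 1` whose distinct entries
are the `-n i` (with multiplicity `m i`), the Laurent polynomial
`P₂(a) = (1-T)² Σ_k γ₂(a(k)) Tᵏ` (given coefficient-wise by
`c k - 2c(k-1) + c(k-2)` with `c k = γ₂(a(k))`) is the sum over `i` of: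
`T^{(nᵢ+2)/3}(2mᵢ + mᵢT)` if `nᵢ ≡ 1 (3)`, `T^{(nᵢ+1)/3}(mᵢ + 2mᵢT)` if
`nᵢ ≡ 2 (3)`, and `T^{nᵢ/3}·3mᵢT` if `nᵢ ≡ 0 (3)`. -/
theorem P_two_formula (a : ℤ → ℤ) (r : ℤ) (hr : 1 < r)
    (hap : CycleAperiodic a r) (t : ℤ)
    (ι : Type*) [Fintype ι] [DecidableEq ι] (n : ι → ℤ)
    (hninj : Function.Injective n)
    (hcover : ∀ j ∈ Finset.Ico t (t + r), ∃ i, a j = -n i)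
    (honto : ∀ i, ∃ j ∈ Finset.Ico t (t + r), a j = -n i)
    (m : ι → ℤ)
    (hm : ∀ i, m i = ((Finset.Ico t (t + r)).filter fun j => a j = -n i).card) :
    ∀ k : ℤ,
      gammaTwo (fun j => a j + 3 * k) r t -
          2 * gammaTwo (fun j => a j + 3 * (k - 1)) r t +
          gammaTwo (fun j => a j + 3 * (k - 2)) r t =
        ∑ i,
          if n i % 3 = 1 then
            (if k = (n i + 2) / 3 then 2 * m i else 0) +
              (if k = (n i + 2) / 3 + 1 then m i else 0)
          else if n i % 3 = 2 then
            (if k = (n i + 1) / 3 then m i else 0) +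
              (if k = (n i + 1) / 3 + 1 then 2 * m i else 0)
          else
            (if k = n i / 3 + 1 then 3 * m i else 0) :=
  P_two_formula_general a r t ι n hninj hcover m hm
end

section
/- Let a be an aperiodic cycle of length r > 1 with distinct entries −n_i. Let s_i = Σ ε(b) over blocs b with entry −n_i, and for n_i ≡ 0 (mod 3) let B_i be the number of locally maximal blocs with entry −n_i. Then P₃(a) := (1−T)^2 Σ_k γ₃(a(k)) T^k equals the sum over i of: T^{(n_i+2)/3}(s_i − s_i T) if n_i ≡ 1 (mod 3); T^{(n_i+1)/3}(s_i − s_i T) if n_i ≡ 2 (mod 3); T^{n_i/3}(s_i − s_i T − B_i(1−T)^2) if n_i ≡ 0 (mod 3). -/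
/-! Adding a constant to all entries changes neither the blocs nor their signs `ε`, only which
blocs are positive: a bloc with entry `-m` is positive in `a(k)` iff `m ≤ 3k`, and `ε*` differs
from `ε` only on the locally maximal blocs with entry `0`, i.e. where `m = 3k`. Hence
`γ₃(a(k)) = Σᵢ (sᵢ [nᵢ ≤ 3k] - Bᵢ [nᵢ = 3k])`, and `P₃(a)` is the sum of the second differences
in `k` of these step functions. -/

section Shift

variable (a : ℤ → ℤ) (c i : ℤ)

lemma blocStart_add_const : blocStart (fun x => a x + c) i ↔ blocStart a i := by
  simp only [blocStart, ne_eq, add_left_inj]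

lemma blocLen_add_const : blocLen (fun x => a x + c) i = blocLen a i := by
  simp only [blocLen, ne_eq, add_left_inj]

lemma blocEps_add_const : blocEps (fun x => a x + c) i = blocEps a i := by
  simp only [blocEps, blocLen_add_const, add_lt_add_iff_right]

lemma blocEpsStar_add_const :
    blocEpsStar (fun x => a x + c) i =
      if a i + c = 0 ∧ blocEps a i = 1 then 0 else blocEps a i := by
  simp only [blocEpsStar, blocEps_add_const]

end Shift

lemma Finset.sum_eq_sum_fiberwise_of_injective {α β ι M : Type*} [Fintype ι] [DecidableEq β]
    [AddCommMonoid M] {S : Finset α} {g : α → β} {n : ι → β} (hn : Function.Injective n)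
    (hcover : ∀ j ∈ S, ∃ i, g j = n i) (f : α → M) :
    ∑ j ∈ S, f j = ∑ i, ∑ j ∈ S with g j = n i, f j := by
  have hmaps : ∀ j ∈ S, g j ∈ Finset.univ.image n := fun j hj => by
    obtain ⟨i, hi⟩ := hcover j hj
    exact hi ▸ Finset.mem_image_of_mem n (Finset.mem_univ i)
  rw [← Finset.sum_fiberwise_of_maps_to hmaps, Finset.sum_image hn.injOn]

lemma gammaThree_summand_add_const (a : ℤ → ℤ) (m c j : ℤ) (hj : a j = -m) :
    (if blocStart (fun x => a x + c) j ∧ 0 ≤ a j + c then blocEpsStar (fun x => a x + c) j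
      else 0) =
      (if m ≤ c then (if blocStart a j then blocEps a j else 0) else 0) -
        (if m = c then (if blocStart a j ∧ blocEps a j = 1 then 1 else 0) else 0) := by
  simp only [blocStart_add_const, blocEpsStar_add_const, hj]
  by_cases hb : blocStart a j
  · simp only [hb, true_and]
    split_ifs <;> omega
  · simp [hb]

lemma gammaThree_add_const {ι : Type*} [Fintype ι] (a : ℤ → ℤ) (r t c : ℤ) (n : ι → ℤ)
    (hninj : Function.Injective n) (hcover : ∀ j ∈ Finset.Ico t (t + r), ∃ i, a j = -n i) :
    gammaThree (fun j => a j + c) r t =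
      ∑ i, ((if n i ≤ c then ∑ j ∈ Finset.Ico t (t + r),
                if blocStart a j ∧ a j = -n i then blocEps a j else 0 else 0) -
            (if n i = c then ∑ j ∈ Finset.Ico t (t + r),
                if blocStart a j ∧ a j = -n i ∧ blocEps a j = 1 then 1 else 0 else 0)) := by
  rw [gammaThree, Finset.sum_eq_sum_fiberwise_of_injective (n := fun i => -n i)
    (neg_injective.comp hninj) hcover]
  refine Finset.sum_congr rfl fun i _ => ?_
  rw [Finset.sum_congr rfl fun j hj =>
      gammaThree_summand_add_const a (n i) c j (Finset.mem_filter.1 hj).2,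
    Finset.sum_sub_distrib]
  congr 1 <;> split_ifs <;>
    simp only [Finset.sum_const_zero, Finset.sum_filter, ← ite_and, and_left_comm, and_comm]

lemma ite_le_second_difference (k₀ s k : ℤ) :
    (if k₀ ≤ k then s else 0) - 2 * (if k₀ ≤ k - 1 then s else 0) + (if k₀ ≤ k - 2 then s else 0)
      = (if k = k₀ then s else 0) + (if k = k₀ + 1 then -s else 0) := by
  split_ifs <;> omega

lemma ite_le_three_mul_second_difference (m s B k : ℤ) :
    ((if m ≤ 3 * k then s else 0) - (if m = 3 * k then B else 0)) -
        2 * ((if m ≤ 3 * (k - 1) then s else 0) - (if m = 3 * (k - 1) then B else 0)) +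
        ((if m ≤ 3 * (k - 2) then s else 0) - (if m = 3 * (k - 2) then B else 0)) =
      if m % 3 = 1 then
        (if k = (m + 2) / 3 then s else 0) + (if k = (m + 2) / 3 + 1 then -s else 0)
      else if m % 3 = 2 then
        (if k = (m + 1) / 3 then s else 0) + (if k = (m + 1) / 3 + 1 then -s else 0)
      else
        (if k = m / 3 then s - B else 0) + (if k = m / 3 + 1 then -s + 2 * B else 0) +
          (if k = m / 3 + 2 then -B else 0) := by
  have hle : ∀ j, m ≤ 3 * j ↔ (m + 2) / 3 ≤ j := by omega
  simp only [hle]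
  rcases (by omega : m % 3 = 0 ∨ m % 3 = 1 ∨ m % 3 = 2) with hm | hm | hm
  · have heq : ∀ j, m = 3 * j ↔ j = m / 3 := fun j => by omega
    have hk₀ : (m + 2) / 3 = m / 3 := by omega
    rw [if_neg (show m % 3 ≠ 1 by omega), if_neg (show m % 3 ≠ 2 by omega)]
    simp only [heq, hk₀]
    generalize m / 3 = q
    split_ifs <;> omega
  · have heq : ∀ j, m ≠ 3 * j := fun j => by omega
    rw [if_pos hm]
    simp only [heq, if_false, sub_zero]
    exact ite_le_second_difference _ s k
  · have heq : ∀ j, m ≠ 3 * j := fun j => by omega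
    have hk₀ : (m + 1) / 3 = (m + 2) / 3 := by omega
    rw [if_neg (show m % 3 ≠ 1 by omega), if_pos hm, hk₀]
    simp only [heq, if_false, sub_zero]
    exact ite_le_second_difference _ s k

theorem P_three_formula_general (a : ℤ → ℤ) (r : ℤ) (t : ℤ)
    (ι : Type*) [Fintype ι] (n : ι → ℤ)
    (hninj : Function.Injective n)
    (hcover : ∀ j ∈ Finset.Ico t (t + r), ∃ i, a j = -n i)
    (s B : ι → ℤ)
    (hs : ∀ i, s i = ∑ j ∈ Finset.Ico t (t + r),
      if blocStart a j ∧ a j = -n i then blocEps a j else 0)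
    (hB : ∀ i, B i = ∑ j ∈ Finset.Ico t (t + r),
      if blocStart a j ∧ a j = -n i ∧ blocEps a j = 1 then 1 else 0) :
    ∀ k : ℤ,
      gammaThree (fun j => a j + 3 * k) r t -
          2 * gammaThree (fun j => a j + 3 * (k - 1)) r t +
          gammaThree (fun j => a j + 3 * (k - 2)) r t =
        ∑ i,
          if n i % 3 = 1 then
            (if k = (n i + 2) / 3 then s i else 0) +
              (if k = (n i + 2) / 3 + 1 then -s i else 0)
          else if n i % 3 = 2 then
            (if k = (n i + 1) / 3 then s i else 0) +
              (if k = (n i + 1) / 3 + 1 then -s i else 0)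
          else
            (if k = n i / 3 then s i - B i else 0) +
              (if k = n i / 3 + 1 then -s i + 2 * B i else 0) +
              (if k = n i / 3 + 2 then -B i else 0) := by
  intro k
  simp only [gammaThree_add_const a r t _ n hninj hcover, ← hs, ← hB]
  rw [Finset.mul_sum, ← Finset.sum_sub_distrib, ← Finset.sum_add_distrib]
  exact Finset.sum_congr rfl fun i _ => ite_le_three_mul_second_difference (n i) (s i) (B i) k

/-- Theorem 2.9: for an aperiodic cycle of length `r > 1` with distinct entries
`-n i`, let `s i = Σ ε(b)` over blocs with entry `-n i` and `B i` the number of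
locally maximal blocs with entry `-n i`.  Then the Laurent polynomial
`P₃(a) = (1-T)² Σ_k γ₃(a(k)) Tᵏ` (given coefficient-wise by
`c k - 2c(k-1) + c(k-2)` with `c k = γ₃(a(k))`) is the sum over `i` of:
`T^{(nᵢ+2)/3}(sᵢ - sᵢT)` if `nᵢ ≡ 1 (3)`, `T^{(nᵢ+1)/3}(sᵢ - sᵢT)` if
`nᵢ ≡ 2 (3)`, and `T^{nᵢ/3}(sᵢ - sᵢT - Bᵢ(1-T)²)` if `nᵢ ≡ 0 (3)`. -/
theorem P_three_formula (a : ℤ → ℤ) (r : ℤ) (hr : 1 < r)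
    (hap : CycleAperiodic a r) (t : ℤ)
    (ι : Type*) [Fintype ι] [DecidableEq ι] (n : ι → ℤ)
    (hninj : Function.Injective n)
    (hcover : ∀ j ∈ Finset.Ico t (t + r), ∃ i, a j = -n i)
    (honto : ∀ i, ∃ j ∈ Finset.Ico t (t + r), a j = -n i)
    (s B : ι → ℤ)
    (hs : ∀ i, s i = ∑ j ∈ Finset.Ico t (t + r),
      if blocStart a j ∧ a j = -n i then blocEps a j else 0)
    (hB : ∀ i, B i = ∑ j ∈ Finset.Ico t (t + r),
      if blocStart a j ∧ a j = -n i ∧ blocEps a j = 1 then 1 else 0) :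
    ∀ k : ℤ,
      gammaThree (fun j => a j + 3 * k) r t -
          2 * gammaThree (fun j => a j + 3 * (k - 1)) r t +
          gammaThree (fun j => a j + 3 * (k - 2)) r t =
        ∑ i,
          if n i % 3 = 1 then
            (if k = (n i + 2) / 3 then s i else 0) +
              (if k = (n i + 2) / 3 + 1 then -s i else 0)
          else if n i % 3 = 2 then
            (if k = (n i + 1) / 3 then s i else 0) +
              (if k = (n i + 1) / 3 + 1 then -s i else 0)
          else
            (if k = n i / 3 then s i - B i else 0) +
              (if k = n i / 3 + 1 then -s i + 2 * B i else 0) +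
              (if k = n i / 3 + 2 then -B i else 0) :=
  P_three_formula_general a r t ι n hninj hcover s B hs hB
end
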